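/- Let A ∈ ℝ^{n×n} be a non-singular tridiagonal matrix and X = A⁻¹, and let 2 ≤ k ≤ n. Suppose the lower-triangle column ratio q_k is infinite, i.e. there exists an index j with k ≤ j ≤ n such that x_{j,k} = 0 and x_{j,k-1} ≠ 0. Then x_{s,k} = 0 for all k ≤ s ≤ n, and x_{k,j'} = 0 for all k ≤ j' ≤ n. -/

import Mathlib

/-!
Index from `0` and let `p = k - 1`, so that column `k` of `X = A⁻¹` has index `p`; let `A_p` be
the leading principal `p × p` block of `A`. If `v` is a vector `w ∈ R^p` padded with zeros, then
because `A` is upper Hessenberg, `A v` agrees with `A_p w` in the first `p` rows, has some entry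
`c` in row `p` and vanishes below it; hence `v = X (A_p w, 0) + c · X e_p`, and `v` vanishes from
row `p` on.

If `A_p` were regular, choosing `A_p w = e_{p-1}` would give `x_{j,k-1} + c x_{j,k} = 0` for all
`j ≥ k`, contradicting `x_{j,k} = 0 ≠ x_{j,k-1}`. So `A_p` is singular, and a kernel vector `w ≠ 0`
gives `v = c · X e_p` with `c ≠ 0`: column `k` of `X` vanishes from row `k` on. Since `A` is
also lower Hessenberg, the same argument for `Aᵀ` gives the statement about row `k`.
-/

open Matrix Function

theorem Function.Injective.extend_single {α β γ : Type*} [DecidableEq α] [DecidableEq β]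
    [Zero γ] {f : α → β} (hf : Injective f) (a : α) (c : γ) :
    extend f (Pi.single a c) 0 = Pi.single (f a) c := by
  funext b
  by_cases hb : ∃ a', f a' = b
  · obtain ⟨a', rfl⟩ := hb
    simp only [hf.extend_apply, Pi.single_apply, hf.eq_iff]
  · rw [extend_apply' _ _ _ hb, Pi.single_apply, if_neg (fun h => hb ⟨a, h.symm⟩),
      Pi.zero_apply]

theorem Fin.extend_castLE_apply_of_le {γ : Type*} [Zero γ] {m n : ℕ} (h : m ≤ n)
    (w : Fin m → γ) (i : Fin n) (hi : m ≤ i) : extend (castLE h) w 0 i = 0 :=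
  extend_apply' _ _ _ fun ⟨a, ha⟩ => by
    have : (i : ℕ) = a := by rw [← ha, val_castLE]
    omega

namespace Matrix

variable {R : Type*} {n m : ℕ}

def IsUpperHessenberg [Zero R] (A : Matrix (Fin n) (Fin n) R) : Prop :=
  ∀ i j : Fin n, (j : ℕ) + 1 < i → A i j = 0

section Semiring

variable [NonUnitalNonAssocSemiring R] {A : Matrix (Fin n) (Fin n) R}

theorem mulVec_extend_castLE_apply_castLE (h : m ≤ n) (w : Fin m → R) (i : Fin m) :
    (A *ᵥ extend (Fin.castLE h) w 0) (Fin.castLE h i)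
      = (A.submatrix (Fin.castLE h) (Fin.castLE h) *ᵥ w) i := by
  simp only [mulVec, dotProduct, submatrix_apply]
  refine (Fintype.sum_of_injective _ (Fin.castLE_injective h) _ _ ?_ ?_).symm
  · rintro j hj
    rw [extend_apply' _ _ _ hj, Pi.zero_apply, mul_zero]
  · intro j
    rw [(Fin.castLE_injective h).extend_apply]

theorem IsUpperHessenberg.mulVec_extend_castLE_apply_of_lt (hA : A.IsUpperHessenberg)
    (h : m ≤ n) (w : Fin m → R) (i : Fin n) (hi : m < i) :
    (A *ᵥ extend (Fin.castLE h) w 0) i = 0 := by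
  simp only [mulVec, dotProduct]
  refine Finset.sum_eq_zero fun j _ => ?_
  by_cases hj : m ≤ j
  · rw [Fin.extend_castLE_apply_of_le h w j hj, mul_zero]
  · rw [hA i j (by omega), zero_mul]

theorem IsUpperHessenberg.mulVec_extend_castLE (hA : A.IsUpperHessenberg) (h : m < n)
    (w : Fin m → R) :
    A *ᵥ extend (Fin.castLE h.le) w 0 =
      extend (Fin.castLE h.le) (A.submatrix (Fin.castLE h.le) (Fin.castLE h.le) *ᵥ w) 0 +
        Pi.single ⟨m, h⟩ ((A *ᵥ extend (Fin.castLE h.le) w 0) ⟨m, h⟩) := by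
  funext i
  rcases lt_trichotomy (i : ℕ) m with hi | hi | hi
  · obtain ⟨i, rfl⟩ : ∃ i' : Fin m, Fin.castLE h.le i' = i := ⟨⟨i, hi⟩, rfl⟩
    rw [Pi.add_apply, (Fin.castLE_injective _).extend_apply,
      mulVec_extend_castLE_apply_castLE, Pi.single_eq_of_ne (Fin.ne_of_lt hi), add_zero]
  · obtain rfl : i = ⟨m, h⟩ := Fin.ext hi
    rw [Pi.add_apply, Fin.extend_castLE_apply_of_le _ _ (⟨m, h⟩ : Fin n) le_rfl,
      Pi.single_eq_same, zero_add]
  · rw [hA.mulVec_extend_castLE_apply_of_lt h.le w i hi, Pi.add_apply,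
      Fin.extend_castLE_apply_of_le _ _ _ hi.le, Pi.single_eq_of_ne (Fin.ne_of_gt hi), add_zero]

end Semiring

theorem IsUpperHessenberg.inv_apply_eq_zero_of_inv_apply_succ_eq_zero [CommRing R]
    {A : Matrix (Fin n) (Fin n) R} (hA : A.IsUpperHessenberg) (hdet : IsUnit A.det)
    (h : m + 1 < n) (hreg : IsUnit (A.submatrix (Fin.castLE h.le) (Fin.castLE h.le)).det)
    (i : Fin n) (hi : m + 1 ≤ i) (hzero : A⁻¹ i ⟨m + 1, h⟩ = 0) :
    A⁻¹ i ⟨m, by omega⟩ = 0 := by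
  set B := A.submatrix (Fin.castLE h.le) (Fin.castLE h.le)
  set w := B⁻¹ *ᵥ Pi.single (Fin.last m) 1
  have hBw : B *ᵥ w = Pi.single (Fin.last m) 1 := by
    rw [mulVec_mulVec, mul_nonsing_inv _ hreg, one_mulVec]
  have hAv := hA.mulVec_extend_castLE h w
  rw [hBw, (Fin.castLE_injective _).extend_single] at hAv
  have hv := congr_arg (A⁻¹ *ᵥ ·) hAv
  simp only [mulVec_mulVec, nonsing_inv_mul _ hdet, one_mulVec] at hv
  have hvi := congr_fun hv i
  simp only [mulVec, dotProduct_add, dotProduct_single] at hvi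
  rw [Fin.extend_castLE_apply_of_le _ _ _ hi, hzero, zero_mul, add_zero, mul_one] at hvi
  exact hvi.symm

theorem IsUpperHessenberg.inv_apply_eq_zero_of_det_submatrix_eq_zero [CommRing R] [IsDomain R]
    {A : Matrix (Fin n) (Fin n) R} (hA : A.IsUpperHessenberg) (hdet : IsUnit A.det)
    (h : m < n) (hsing : (A.submatrix (Fin.castLE h.le) (Fin.castLE h.le)).det = 0)
    (i : Fin n) (hi : m ≤ i) : A⁻¹ i ⟨m, h⟩ = 0 := by
  obtain ⟨w, hw0, hw⟩ := exists_mulVec_eq_zero_iff.mpr hsing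
  set v := extend (Fin.castLE h.le) w 0
  set c := (A *ᵥ v) ⟨m, h⟩
  have hAv : A *ᵥ v = Pi.single ⟨m, h⟩ c := by
    rw [hA.mulVec_extend_castLE h w, hw, extend_zero, zero_add]
  have hv : v = A⁻¹ *ᵥ Pi.single ⟨m, h⟩ c := by
    rw [← hAv, mulVec_mulVec, nonsing_inv_mul _ hdet, one_mulVec]
  have hc : c ≠ 0 := by
    rintro hc
    refine hw0 (funext fun j => ?_)
    simpa [v, hc, (Fin.castLE_injective _).extend_apply] using congr_fun hv (Fin.castLE h.le j)
  have hvi : v i = A⁻¹ i ⟨m, h⟩ * c := by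
    simp only [hv, mulVec, dotProduct_single]
  rw [show v i = 0 from Fin.extend_castLE_apply_of_le _ _ _ hi] at hvi
  exact (mul_eq_zero.mp hvi.symm).resolve_right hc

end Matrix

theorem inverse_zeros_of_infinite_column_ratio_general {n : ℕ}
    (A : Matrix (Fin n) (Fin n) ℝ) (x : ℕ → ℕ → ℝ)
    (hXx : ∀ i j : Fin n, A⁻¹ i j = x ((i : ℕ) + 1) ((j : ℕ) + 1))
    (htri : ∀ i j : Fin n, ((i : ℕ) + 1 < (j : ℕ) ∨ (j : ℕ) + 1 < (i : ℕ)) → A i j = 0)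
    (hdet : IsUnit A.det)
    (k : ℕ) (hk1 : 2 ≤ k) (hkn : k ≤ n)
    (hq : ∃ j : ℕ, k ≤ j ∧ j ≤ n ∧ x j k = 0 ∧ x j (k - 1) ≠ 0) :
    (∀ s, k ≤ s → s ≤ n → x s k = 0) ∧ (∀ j, k ≤ j → j ≤ n → x k j = 0) := by
  obtain ⟨m, rfl⟩ : ∃ m, k = m + 2 := ⟨k - 2, by omega⟩
  have hm : m + 1 < n := by omega
  have hx : ∀ s t (hs : 0 < s) (hsn : s ≤ n) (ht : 0 < t) (htn : t ≤ n),
      x s t = A⁻¹ ⟨s - 1, by omega⟩ ⟨t - 1, by omega⟩ := by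
    intro s t hs hsn ht htn
    simp only [hXx, Nat.sub_add_cancel hs, Nat.sub_add_cancel ht]
  have hupper : A.IsUpperHessenberg := fun i j hij => htri i j (Or.inr hij)
  have hlower : Aᵀ.IsUpperHessenberg := fun i j hij => htri j i (Or.inl hij)
  have hsing : (A.submatrix (Fin.castLE hm.le) (Fin.castLE hm.le)).det = 0 := by
    obtain ⟨j, hkj, hjn, hxjk, hxjk1⟩ := hq
    by_contra hreg
    rw [hx j _ (by omega) hjn (by omega) (by omega)] at hxjk hxjk1
    exact hxjk1 (hupper.inv_apply_eq_zero_of_inv_apply_succ_eq_zero hdet hm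
      (isUnit_iff_ne_zero.mpr hreg) _ (by dsimp only; omega) hxjk)
  refine ⟨fun s hks hsn => ?_, fun t hkt htn => ?_⟩
  · rw [hx s _ (by omega) hsn (by omega) (by omega)]
    exact hupper.inv_apply_eq_zero_of_det_submatrix_eq_zero hdet hm hsing _ (by dsimp only; omega)
  · rw [hx _ t (by omega) (by omega) (by omega) htn]
    have hrow := hlower.inv_apply_eq_zero_of_det_submatrix_eq_zero (by rwa [det_transpose]) hm
      (by rwa [← transpose_submatrix, det_transpose]) ⟨t - 1, by omega⟩ (by dsimp only; omega)
    rwa [← transpose_nonsing_inv, transpose_apply] at hrow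

/-- if the lower-triangle column ratio `q_k` of the inverse of a
non-singular tridiagonal matrix is infinite (some `x j k = 0` with `x j (k-1) ≠ 0`,
`k ≤ j ≤ n`), then the whole tail of column `k` and of row `k` of `X = A⁻¹` vanishes.
Entries are 1-based via `a`, `x`. -/
theorem inverse_zeros_of_infinite_column_ratio {n : ℕ}
    (A : Matrix (Fin n) (Fin n) ℝ) (a x : ℕ → ℕ → ℝ)
    (hAa : ∀ i j : Fin n, A i j = a ((i : ℕ) + 1) ((j : ℕ) + 1))
    (hXx : ∀ i j : Fin n, A⁻¹ i j = x ((i : ℕ) + 1) ((j : ℕ) + 1))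
    (htri : ∀ i j : Fin n, ((i : ℕ) + 1 < (j : ℕ) ∨ (j : ℕ) + 1 < (i : ℕ)) → A i j = 0)
    (hdet : IsUnit A.det)
    (k : ℕ) (hk1 : 2 ≤ k) (hkn : k ≤ n)
    (hq : ∃ j : ℕ, k ≤ j ∧ j ≤ n ∧ x j k = 0 ∧ x j (k - 1) ≠ 0) :
    (∀ s, k ≤ s → s ≤ n → x s k = 0) ∧ (∀ j, k ≤ j → j ≤ n → x k j = 0) :=
  inverse_zeros_of_infinite_column_ratio_general A x hXx htri hdet k hk1 hkn hq
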